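/- Let p and q be real numbers with p > 0, q > 0 and p ≠ q, let n be a natural number, and let x, y be real numbers. Then the (p,q)-deformed Euler (Gauss binomial) formula holds: Π_{i=1}^{n} (x·p^{i−1} + y·q^{i−1}) = Σ_{κ=0}^{n} C_{p,q}(n,κ) · p^{(n−κ)(n−κ−1)/2} · q^{κ(κ−1)/2} · x^{n−κ} · y^{κ}. -/
import Mathlib


/-- The (p,q)-deformed number `[x]_{p,q} = (p^x - q^x)/(p - q)` (real powers). -/
noncomputable def pqNum (p q x : ℝ) : ℝ := (p ^ x - q ^ x) / (p - q)

/-- The (p,q)-factorial `[n]_{p,q}! = ∏_{i=1}^n [i]_{p,q}`. -/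
noncomputable def pqFac (p q : ℝ) (n : ℕ) : ℝ := ∏ i ∈ Finset.range n, pqNum p q ((i : ℝ) + 1)

/-- The (p,q)-binomial coefficient `C_{p,q}(n,κ)`. -/
noncomputable def pqBinom (p q : ℝ) (n k : ℕ) : ℝ := pqFac p q n / (pqFac p q k * pqFac p q (n - k))

lemma pqNum_pos {p q : ℝ} (hp : 0 < p) (hq : 0 < q) (hpq : p ≠ q) {x : ℝ} (hx : 0 < x) :
    0 < pqNum p q x := by
  unfold pqNum
  rcases lt_or_gt_of_ne hpq with h | h
  · apply div_pos_of_neg_of_neg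
    · have := Real.rpow_lt_rpow hp.le h hx; linarith
    · linarith
  · apply div_pos
    · have := Real.rpow_lt_rpow hq.le h hx; linarith
    · linarith

lemma pqFac_pos {p q : ℝ} (hp : 0 < p) (hq : 0 < q) (hpq : p ≠ q) (n : ℕ) :
    0 < pqFac p q n := by
  apply Finset.prod_pos; intro i _; exact pqNum_pos hp hq hpq (by positivity)

lemma pqFac_succ (p q : ℝ) (n : ℕ) :
    pqFac p q (n + 1) = pqFac p q n * pqNum p q ((n : ℝ) + 1) :=
  Finset.prod_range_succ _ _

lemma pqNum_add {p q : ℝ} (hpq : p ≠ q) (a b : ℕ) :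
    pqNum p q ((a : ℝ) + (b : ℝ)) = p ^ a * pqNum p q (b : ℝ) + q ^ b * pqNum p q (a : ℝ) := by
  unfold pqNum
  rw [show (a : ℝ) + (b : ℝ) = ((a + b : ℕ) : ℝ) by push_cast; ring]
  rw [Real.rpow_natCast, Real.rpow_natCast, Real.rpow_natCast, Real.rpow_natCast,
    Real.rpow_natCast, Real.rpow_natCast, pow_add, pow_add]
  field_simp [sub_ne_zero.mpr hpq]
  ring

lemma pqBinom_zero {p q : ℝ} (hp : 0 < p) (hq : 0 < q) (hpq : p ≠ q) (n : ℕ) :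
    pqBinom p q n 0 = 1 := by
  unfold pqBinom
  simp only [Nat.sub_zero]
  rw [show pqFac p q 0 = 1 from Finset.prod_range_zero _, one_mul,
    div_self (pqFac_pos hp hq hpq n).ne']

lemma pqBinom_self {p q : ℝ} (hp : 0 < p) (hq : 0 < q) (hpq : p ≠ q) (n : ℕ) :
    pqBinom p q n n = 1 := by
  unfold pqBinom
  simp only [Nat.sub_self]
  rw [show pqFac p q 0 = 1 from Finset.prod_range_zero _, mul_one,
    div_self (pqFac_pos hp hq hpq n).ne']

lemma pqPascal {p q : ℝ} (hp : 0 < p) (hq : 0 < q) (hpq : p ≠ q) (k m : ℕ) :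
    pqBinom p q (k + m + 2) (k + 1) =
      p ^ (k + 1) * pqBinom p q (k + m + 1) (k + 1) +
      q ^ (m + 1) * pqBinom p q (k + m + 1) k := by
  unfold pqBinom
  rw [show k + m + 2 - (k + 1) = m + 1 by omega, show k + m + 1 - (k + 1) = m by omega,
    show k + m + 1 - k = m + 1 by omega]
  rw [show k + m + 2 = (k + m + 1) + 1 by ring, pqFac_succ, pqFac_succ p q m, pqFac_succ p q k]
  have key : pqNum p q (((k + m + 1 : ℕ) : ℝ) + 1) =
      p ^ (k + 1) * pqNum p q ((m : ℝ) + 1) + q ^ (m + 1) * pqNum p q ((k : ℝ) + 1) := by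
    have h := pqNum_add hpq (k + 1) (m + 1)
    push_cast at h
    rw [show ((k + m + 1 : ℕ) : ℝ) + 1 = ((k : ℝ) + 1) + ((m : ℝ) + 1) by push_cast; ring, h]
  rw [key]
  have h1 := (pqFac_pos hp hq hpq (k + m + 1)).ne'
  have h2 := (pqFac_pos hp hq hpq k).ne'
  have h3 := (pqFac_pos hp hq hpq m).ne'
  have h4 := (pqNum_pos hp hq hpq (x := (k : ℝ) + 1) (by positivity)).ne'
  have h5 := (pqNum_pos hp hq hpq (x := (m : ℝ) + 1) (by positivity)).ne'
  field_simp

lemma choose_two_succ (m : ℕ) : (m + 1).choose 2 = m.choose 2 + m := by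
  rw [Nat.choose_succ_succ, Nat.choose_one_right, Nat.add_comm]

lemma step_term {p q : ℝ} (hp : 0 < p) (hq : 0 < q) (hpq : p ≠ q) (x y : ℝ) (k m : ℕ) :
    pqBinom p q (k + m + 2) (k + 1) * p ^ ((k + m + 2 - (k + 1)).choose 2) *
        q ^ ((k + 1).choose 2) * x ^ (k + m + 2 - (k + 1)) * y ^ (k + 1) =
      pqBinom p q (k + m + 1) (k + 1) * p ^ ((k + m + 1 - (k + 1)).choose 2) *
          q ^ ((k + 1).choose 2) * x ^ (k + m + 1 - (k + 1)) * y ^ (k + 1) * (x * p ^ (k + m + 1)) +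
      pqBinom p q (k + m + 1) k * p ^ ((k + m + 1 - k).choose 2) *
          q ^ (k.choose 2) * x ^ (k + m + 1 - k) * y ^ k * (y * q ^ (k + m + 1)) := by
  rw [show k + m + 2 - (k + 1) = m + 1 by omega, show k + m + 1 - (k + 1) = m by omega,
    show k + m + 1 - k = m + 1 by omega, pqPascal hp hq hpq k m,
    choose_two_succ m, choose_two_succ k]
  ring


/-- The (p,q)-deformed Euler (Gauss binomial) formula. -/
theorem pq_euler_formula (p q : ℝ) (hp : 0 < p) (hq : 0 < q) (hpq : p ≠ q)
    (n : ℕ) (x y : ℝ) :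
    ∏ i ∈ Finset.range n, (x * p ^ i + y * q ^ i) =
      ∑ κ ∈ Finset.range (n + 1),
        pqBinom p q n κ * p ^ ((n - κ).choose 2) * q ^ (κ.choose 2)
          * x ^ (n - κ) * y ^ κ := by
  induction n with
  | zero => simp [pqBinom, pqFac]
  | succ n ih =>
    rw [Finset.prod_range_succ, ih]
    rw [Finset.sum_range_succ' _ (n + 1)]
    rw [Finset.sum_range_succ (fun k => pqBinom p q (n + 1) (k + 1) *
      p ^ ((n + 1 - (k + 1)).choose 2) * q ^ ((k + 1).choose 2) *
      x ^ (n + 1 - (k + 1)) * y ^ (k + 1)) n]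
    rw [Finset.sum_range_succ (fun κ => pqBinom p q n κ * p ^ ((n - κ).choose 2) *
      q ^ (κ.choose 2) * x ^ (n - κ) * y ^ κ) n]
    have split : ∀ i ∈ Finset.range n,
        pqBinom p q (n + 1) (i + 1) * p ^ ((n + 1 - (i + 1)).choose 2) *
            q ^ ((i + 1).choose 2) * x ^ (n + 1 - (i + 1)) * y ^ (i + 1) =
          pqBinom p q n (i + 1) * p ^ ((n - (i + 1)).choose 2) *
              q ^ ((i + 1).choose 2) * x ^ (n - (i + 1)) * y ^ (i + 1) * (x * p ^ n) +
          pqBinom p q n i * p ^ ((n - i).choose 2) *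
              q ^ (i.choose 2) * x ^ (n - i) * y ^ i * (y * q ^ n) := by
      intro i hi
      obtain ⟨m, rfl⟩ : ∃ m, n = i + m + 1 :=
        ⟨n - i - 1, by have := Finset.mem_range.mp hi; omega⟩
      exact step_term hp hq hpq x y i m
    rw [Finset.sum_congr rfl split, Finset.sum_add_distrib]
    -- boundary terms
    have hb0 : pqBinom p q (n + 1) 0 * p ^ ((n + 1 - 0).choose 2) * q ^ (Nat.choose 0 2) *
        x ^ (n + 1 - 0) * y ^ 0 =
        pqBinom p q n 0 * p ^ ((n - 0).choose 2) * q ^ (Nat.choose 0 2) * x ^ (n - 0) * y ^ 0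
          * (x * p ^ n) := by
      rw [pqBinom_zero hp hq hpq, pqBinom_zero hp hq hpq, Nat.sub_zero, Nat.sub_zero,
        choose_two_succ n]
      ring
    have hbn : pqBinom p q (n + 1) (n + 1) * p ^ ((n + 1 - (n + 1)).choose 2) *
        q ^ ((n + 1).choose 2) * x ^ (n + 1 - (n + 1)) * y ^ (n + 1) =
        pqBinom p q n n * p ^ ((n - n).choose 2) * q ^ (n.choose 2) * x ^ (n - n) * y ^ n
          * (y * q ^ n) := by
      rw [pqBinom_self hp hq hpq, pqBinom_self hp hq hpq, Nat.sub_self, Nat.sub_self,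
        choose_two_succ n]
      ring
    rw [hb0, hbn]
    have shift : ∑ i ∈ Finset.range n, (pqBinom p q n (i + 1) * p ^ ((n - (i + 1)).choose 2) *
          q ^ ((i + 1).choose 2) * x ^ (n - (i + 1)) * y ^ (i + 1) * (x * p ^ n)) +
        pqBinom p q n 0 * p ^ ((n - 0).choose 2) * q ^ (Nat.choose 0 2) * x ^ (n - 0) * y ^ 0
          * (x * p ^ n) =
        ∑ i ∈ Finset.range n, (pqBinom p q n i * p ^ ((n - i).choose 2) *
          q ^ (i.choose 2) * x ^ (n - i) * y ^ i * (x * p ^ n)) +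
        pqBinom p q n n * p ^ ((n - n).choose 2) * q ^ (n.choose 2) * x ^ (n - n) * y ^ n
          * (x * p ^ n) := by
      rw [← Finset.sum_range_succ' (fun κ => pqBinom p q n κ * p ^ ((n - κ).choose 2) *
        q ^ (κ.choose 2) * x ^ (n - κ) * y ^ κ * (x * p ^ n)) n,
        Finset.sum_range_succ (fun κ => pqBinom p q n κ * p ^ ((n - κ).choose 2) *
        q ^ (κ.choose 2) * x ^ (n - κ) * y ^ κ * (x * p ^ n)) n]
    simp only [mul_add, Finset.sum_add_distrib, ← Finset.sum_mul] at shift ⊢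
    linear_combination -shift
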